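/- With the setup of the previous statement, the sequence n ↦ Σ_{r ∈ TerSeq≤n(C)} tr(End(r)) is monotonically increasing in n and bounded above by tr(C), where TerSeq≤n(C) is the set of reduction sequences from C of length ≤ n ending in a terminal state and End(r) is the endpoint of r. Hence Halt(C) := (⨆ₙ Σ_{r ∈ TerSeq≤n(C)} tr(End(r)))/tr(C) is well defined and lies in [0,1] for tr(C) > 0. -/

import Mathlib

/-! Splitting off the first step of a terminating sequence gives
`termWeight C (n + 1) = ∑_{C ⤳ d} termWeight d n` for reducible `C`, while `termWeight C n = tr C`
for terminal `C`; the bound `termWeight C n ≤ tr C` then follows by induction on `n` from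
`tr C = ∑_{C ⤳ d} tr d`. -/

open scoped ENNReal NNReal

/-- Reduction sequences of `k` steps starting at `C` that end in a terminal state. -/
def TermPaths {State : Type*} (step : State → State → Prop) (C : State) (k : ℕ) :
    Set (Fin (k + 1) → State) :=
  {p | p 0 = C ∧ (∀ i : Fin k, step (p i.castSucc) (p i.succ)) ∧
    ¬∃ d, step (p (Fin.last k)) d}

/-- Total trace of the endpoints of terminating reduction sequences of length `≤ n`. -/
noncomputable def termWeight {State : Type*} (step : State → State → Prop)
    (tr : State → ℝ≥0) (C : State) (n : ℕ) : ℝ≥0∞ :=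
  ∑ k ∈ Finset.range (n + 1), ∑' p : TermPaths step C k, (tr (p.1 (Fin.last k)) : ℝ≥0∞)
namespace TermPaths

variable {State : Type*} {step : State → State → Prop} {C : State}

lemma zero_of_terminal (h : ¬∃ d, step C d) : TermPaths step C 0 = {fun _ => C} := by
  ext p
  constructor
  · rintro ⟨h0, -, -⟩
    funext i
    rw [Fin.fin_one_eq_zero i, h0]
  · rintro rfl
    exact ⟨rfl, fun i => i.elim0, h⟩

lemma zero_of_reducible (h : ∃ d, step C d) : TermPaths step C 0 = ∅ :=
  Set.eq_empty_of_forall_notMem fun _ ⟨h0, _, ht⟩ => ht (h0 ▸ h)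

lemma succ_of_terminal {k : ℕ} (h : ¬∃ d, step C d) : TermPaths step C (k + 1) = ∅ :=
  Set.eq_empty_of_forall_notMem fun p ⟨h0, hs, _⟩ => h ⟨p 1, h0 ▸ hs 0⟩

def consEquiv (C : State) (k : ℕ) :
    (Σ d : {d // step C d}, TermPaths step d.1 k) ≃ TermPaths step C (k + 1) where
  toFun x := ⟨Fin.cons C x.2.1, rfl,
    Fin.cases (by simpa [x.2.2.1] using x.1.2)
      (fun i => by simpa [← Fin.succ_castSucc] using x.2.2.2.1 i),
    by simpa [← Fin.succ_last] using x.2.2.2.2⟩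
  invFun p := ⟨⟨p.1 1, by simpa [p.2.1] using p.2.2.1 0⟩, Fin.tail p.1, rfl,
    fun i => by simpa [Fin.tail, ← Fin.succ_castSucc] using p.2.2.1 i.succ,
    by simpa [Fin.tail, ← Fin.succ_last] using p.2.2.2⟩
  left_inv := by
    rintro ⟨⟨d, hd⟩, q, hq⟩
    obtain rfl : d = q 0 := hq.1.symm
    rfl
  right_inv := by
    rintro ⟨p, h0, hs⟩
    subst h0
    exact Subtype.ext (Fin.cons_self_tail p)

end TermPaths

section termWeight

variable {State : Type*} {step : State → State → Prop} (tr : State → ℝ≥0) {C : State}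

lemma termWeight_of_terminal (h : ¬∃ d, step C d) (n : ℕ) :
    termWeight step tr C n = tr C := by
  have hlong (k : ℕ) :
      ∑' p : TermPaths step C (k + 1), (tr (p.1 (Fin.last (k + 1))) : ℝ≥0∞) = 0 := by
    rw [TermPaths.succ_of_terminal h, tsum_empty]
  rw [termWeight, Finset.sum_range_succ', Finset.sum_congr rfl fun k _ => hlong k,
    Finset.sum_const_zero, zero_add, TermPaths.zero_of_terminal h]
  exact tsum_singleton (fun _ => C) fun p => (tr (p (Fin.last 0)) : ℝ≥0∞)

lemma termWeight_succ_of_reducible (h : ∃ d, step C d) (n : ℕ) :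
    termWeight step tr C (n + 1) = ∑' d : {d // step C d}, termWeight step tr d.1 n := by
  simp only [termWeight]
  rw [Finset.sum_range_succ', TermPaths.zero_of_reducible h, tsum_empty, add_zero,
    Summable.tsum_finsetSum fun _ _ => ENNReal.summable]
  refine Finset.sum_congr rfl fun k _ => ?_
  rw [← (TermPaths.consEquiv C k).tsum_eq, ENNReal.tsum_sigma']
  simp [TermPaths.consEquiv, ← Fin.succ_last]

lemma termWeight_mono : Monotone (termWeight step tr C) := fun _ _ hmn =>
  Finset.sum_le_sum_of_subset (Finset.range_subset_range.mpr (Nat.succ_le_succ hmn))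

lemma termWeight_le_trace
    (hsum : ∀ s, (∃ d, step s d) → (tr s : ℝ≥0∞) = ∑' d : {d // step s d}, (tr d.1 : ℝ≥0∞))
    (n : ℕ) : termWeight step tr C n ≤ tr C := by
  induction n generalizing C with
  | zero =>
    by_cases h : ∃ d, step C d
    · simp [termWeight, TermPaths.zero_of_reducible h]
    · exact (termWeight_of_terminal tr h 0).le
  | succ n ih =>
    by_cases h : ∃ d, step C d
    · calc termWeight step tr C (n + 1) = ∑' d : {d // step C d}, termWeight step tr d.1 n :=
            termWeight_succ_of_reducible tr h n
        _ ≤ ∑' d : {d // step C d}, (tr d.1 : ℝ≥0∞) := ENNReal.tsum_le_tsum fun _ => ih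
        _ = tr C := (hsum C h).symm
    · exact (termWeight_of_terminal tr h _).le

end termWeight

theorem stmt_14_general {State : Type*} (step : State → State → Prop) (tr : State → ℝ≥0)
    (hsum : ∀ s, (∃ d, step s d) →
      (tr s : ℝ≥0∞) = ∑' d : {d // step s d}, (tr d.1 : ℝ≥0∞))
    (C : State) :
    Monotone (termWeight step tr C) ∧
    (∀ n, termWeight step tr C n ≤ (tr C : ℝ≥0∞)) ∧
    (0 < tr C → (⨆ n, termWeight step tr C n) / (tr C : ℝ≥0∞) ≤ 1) := by
  have hle : ∀ n, termWeight step tr C n ≤ tr C := fun n => termWeight_le_trace tr hsum n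
  refine ⟨termWeight_mono tr, hle, fun hC => ?_⟩
  calc (⨆ n, termWeight step tr C n) / (tr C : ℝ≥0∞)
      ≤ (tr C : ℝ≥0∞) / (tr C : ℝ≥0∞) := ENNReal.div_le_div_right (iSup_le hle) _
    _ = 1 := ENNReal.div_self (by exact_mod_cast hC.ne') ENNReal.coe_ne_top

theorem stmt_14 {State : Type*} (step : State → State → Prop) (tr : State → ℝ≥0)
    (hfin : ∀ s, {d | step s d}.Finite)
    (hcard : ∀ s, Set.ncard {d | step s d} ≤ 2)
    (hsum : ∀ s, (∃ d, step s d) →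
      (tr s : ℝ≥0∞) = ∑' d : {d // step s d}, (tr d.1 : ℝ≥0∞))
    (C : State) :
    Monotone (termWeight step tr C) ∧
    (∀ n, termWeight step tr C n ≤ (tr C : ℝ≥0∞)) ∧
    (0 < tr C → (⨆ n, termWeight step tr C n) / (tr C : ℝ≥0∞) ≤ 1) :=
  stmt_14_general step tr hsum C
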